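/- arXiv:1312.4481 — 2 statements merged into one kernel-verified Lean document; each statement's English description precedes it below -/
import Mathlib

section
/- The smoothness indicator of h_l evaluates as ∫_{x_i}^{x_{i+1}} [Δx (h_l')² + Δx³ (h_l'')²] dx = (f_i - f_{i+1})² + (13/3)((f_{i+1}-f_i) - Δx f'_i)². -/
open MeasureTheory intervalIntegral

section NewtonQuadratic

variable (a b c x₀ x₁ : ℝ)

theorem hasDerivAt_newton_quadratic (x : ℝ) :
    HasDerivAt (fun y => a + b * (y - x₀) + c * (y - x₀) * (y - x₁))
      (b + c * (2 * x - x₀ - x₁)) x := by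
  have hx₀ := (hasDerivAt_id' x).sub_const x₀
  have hx₁ := (hasDerivAt_id' x).sub_const x₁
  exact (((hx₀.const_mul b).const_add a).add ((hx₀.const_mul c).mul hx₁)).congr_deriv (by ring)

theorem hasDerivAt_two_mul_sub_sub (x : ℝ) : HasDerivAt (fun y => 2 * y - x₀ - x₁) 2 x :=
  ((((hasDerivAt_id' x).const_mul 2).sub_const x₀).sub_const x₁).congr_deriv (mul_one 2)

theorem deriv_newton_quadratic :
    deriv (fun y => a + b * (y - x₀) + c * (y - x₀) * (y - x₁))
      = fun x => b + c * (2 * x - x₀ - x₁) :=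
  funext fun x => (hasDerivAt_newton_quadratic a b c x₀ x₁ x).deriv

theorem deriv_deriv_newton_quadratic :
    deriv (deriv fun y => a + b * (y - x₀) + c * (y - x₀) * (y - x₁)) = fun _ => 2 * c := by
  rw [deriv_newton_quadratic]
  exact funext fun x =>
    (((hasDerivAt_two_mul_sub_sub x₀ x₁ x).const_mul c).const_add b).deriv.trans (mul_comm c 2)

/-- The cross term vanishes because `2x - x₀ - x₁` is odd about the midpoint. -/
theorem integral_newton_quadratic_deriv_sq :
    ∫ x in x₀..x₁, (b + c * (2 * x - x₀ - x₁)) ^ 2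
      = b ^ 2 * (x₁ - x₀) + c ^ 2 * (x₁ - x₀) ^ 3 / 3 := by
  have hF (x : ℝ) : HasDerivAt
      (fun y => b ^ 2 * y + b * c * (2 * y - x₀ - x₁) ^ 2 / 2 + c ^ 2 * (2 * y - x₀ - x₁) ^ 3 / 6)
      ((b + c * (2 * x - x₀ - x₁)) ^ 2) x := by
    have hu := hasDerivAt_two_mul_sub_sub x₀ x₁ x
    refine ((((hasDerivAt_id' x).const_mul (b ^ 2)).add
      (((hu.pow 2).const_mul (b * c)).div_const 2)).add
      (((hu.pow 3).const_mul (c ^ 2)).div_const 6)).congr_deriv ?_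
    push_cast
    ring
  rw [integral_eq_sub_of_hasDerivAt (fun x _ => hF x)
    ((by fun_prop : Continuous _).intervalIntegrable _ _)]
  ring

end NewtonQuadratic

theorem stmt3 (Δx xi fi fi1 di : ℝ) (hΔx : 0 < Δx)
    (hl : ℝ → ℝ)
    (hhl : ∀ x, hl x = fi + (fi1 - fi) / Δx * (x - xi)
      + ((fi1 - fi) - Δx * di) / Δx ^ 2 * (x - xi) * (x - (xi + Δx))) :
    (∫ x in xi..(xi + Δx),
        (Δx * (deriv hl x) ^ 2 + Δx ^ 3 * (deriv (deriv hl) x) ^ 2))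
      = (fi - fi1) ^ 2 + 13 / 3 * ((fi1 - fi) - Δx * di) ^ 2 := by
  rw [show hl = _ from funext hhl, deriv_deriv_newton_quadratic, deriv_newton_quadratic,
    intervalIntegral.integral_add ((by fun_prop : Continuous _).intervalIntegrable _ _)
      intervalIntegrable_const,
    intervalIntegral.integral_const_mul, integral_newton_quadratic_deriv_sq, intervalIntegral.integral_const,
    smul_eq_mul]
  field_simp
  ring
end

section
/- The smoothness indicator of h_r evaluates as ∫_{x_i}^{x_{i+1}} [Δx (h_r')² + Δx³ (h_r'')²] dx = (f_i - f_{i+1})² + (13/3)(Δx f'_{i+1} - (f_{i+1}-f_i))². -/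
open MeasureTheory intervalIntegral

/-!
After the substitution `x = xᵢ + Δx t`, the weights `Δx` and `Δx³` exactly cancel the powers of
`Δx` coming from the derivatives and from `dx`: writing `D = f_{i+1} - f_i` and
`E = Δx f'_{i+1} - D`, the integrand becomes `(D + E (2t - 1))² + 4E²` on `[0, 1]`. The cross
term integrates to zero against the centred linear function `2t - 1`, leaving `D² + E²/3 + 4E²`.
-/

lemma hasDerivAt_quadratic (p q r α β x : ℝ) :
    HasDerivAt (fun x => p + q * (x - α) + r * (x - α) * (x - β))
      (q + r * (2 * x - α - β)) x := by
  have hα : HasDerivAt (fun x : ℝ => x - α) 1 x := (hasDerivAt_id' x).sub_const α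
  have hβ : HasDerivAt (fun x : ℝ => x - β) 1 x := (hasDerivAt_id' x).sub_const β
  exact ((hα.const_mul q).const_add p).add ((hα.const_mul r).mul hβ) |>.congr_deriv (by ring)

lemma deriv_quadratic (p q r α β : ℝ) :
    deriv (fun x => p + q * (x - α) + r * (x - α) * (x - β))
      = fun x => q + r * (2 * x - α - β) :=
  funext fun x => (hasDerivAt_quadratic p q r α β x).deriv

lemma deriv_deriv_quadratic (p q r α β : ℝ) :
    deriv (deriv (fun x => p + q * (x - α) + r * (x - α) * (x - β))) = fun _ => 2 * r := by
  rw [deriv_quadratic]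
  funext x
  have hlin : HasDerivAt (fun x : ℝ => q + r * (2 * x - α - β)) (2 * r) x :=
    ((((hasDerivAt_id' x).const_mul 2).sub_const α).sub_const β |>.const_mul r).const_add q
      |>.congr_deriv (by ring)
  exact hlin.deriv

lemma integral_sq_linear_centered (a b q r : ℝ) :
    ∫ x in a..b, (q + r * (2 * x - a - b)) ^ 2 = (b - a) * (q ^ 2 + r ^ 2 * (b - a) ^ 2 / 3) := by
  have hF : ∀ x ∈ Set.uIcc a b, HasDerivAt
      (fun x => q ^ 2 * x + q * r * (2 * x - a - b) ^ 2 / 2 + r ^ 2 * (2 * x - a - b) ^ 3 / 6)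
      ((q + r * (2 * x - a - b)) ^ 2) x := by
    intro x _
    have hu : HasDerivAt (fun x : ℝ => 2 * x - a - b) 2 x := by
      exact (((hasDerivAt_id' x).const_mul 2).sub_const a).sub_const b |>.congr_deriv (mul_one 2)
    exact (((hasDerivAt_id' x).const_mul (q ^ 2)).add
      (((hu.fun_pow 2).const_mul (q * r)).div_const 2)).add
      (((hu.fun_pow 3).const_mul (r ^ 2)).div_const 6) |>.congr_deriv (by norm_num; ring)
  rw [integral_eq_sub_of_hasDerivAt hF (Continuous.intervalIntegrable (by fun_prop) _ _)]
  ring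

theorem stmt4 (Δx xi fi fi1 di1 : ℝ) (hΔx : 0 < Δx)
    (hr : ℝ → ℝ)
    (hhr : ∀ x, hr x = fi + (fi1 - fi) / Δx * (x - xi)
      + (Δx * di1 - (fi1 - fi)) / Δx ^ 2 * (x - xi) * (x - (xi + Δx))) :
    (∫ x in xi..(xi + Δx),
        (Δx * (deriv hr x) ^ 2 + Δx ^ 3 * (deriv (deriv hr) x) ^ 2))
      = (fi - fi1) ^ 2 + 13 / 3 * (Δx * di1 - (fi1 - fi)) ^ 2 := by
  rw [funext hhr, deriv_deriv_quadratic, deriv_quadratic]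
  beta_reduce
  rw [integral_add (Continuous.intervalIntegrable (by fun_prop) _ _) intervalIntegrable_const,
    intervalIntegral.integral_const_mul, integral_sq_linear_centered,
    intervalIntegral.integral_const, add_sub_cancel_left, smul_eq_mul]
  field_simp
  ring
end
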